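/- arXiv:1712.09145 — 8 statements merged into one kernel-verified Lean document; each statement's English description precedes it below -/
import Mathlib

section
/- Correctness of the CL-Ring scheme: Let n be a positive natural number, s : Fin n, and let κ, x_s : ZMod q, scalars r, h : Fin n → ZMod q, and elements Q : Fin n → G₁, Pk : Fin n → G₁, U : G₁ with P₀ = κ•P, Pk s = x_s•P (the signer's public key) and D_s = κ•(Q s) (the signer's partial private key). Define y : Fin n → G₂ by y i = e((r i)•P, P) for i ≠ s and y s = e((r s)•P, P) · e(-P₀, ∑_{i ≠ s} (h i)•(Q i)) · e(-U, ∑_{i ≠ s} (h i)•(Pk i)), and set V = (∑ i, r i)•P + (h s)•(D_s + x_s•U). Then the verification equation holds: e(V, P) = (∏ i, y i) · e(∑ i, (h i)•(Q i), P₀) · e(∑ i, (h i)•(Pk i), U). -/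
/-!
Expand `V`: bilinearity turns `e V P` into `∏ i, e (r i • P) P` times `e (h s • Q s) P₀` and
`e (h s • Pk s) U`, the latter two by moving the scalars `κ` and `x_s` across the pairing.
On the other side, by symmetry the extra factors `e (-P₀) (∑_{i ≠ s} h i • Q i)` and
`e (-U) (∑_{i ≠ s} h i • Pk i)` planted in `y s` are exactly the inverses of the `i ≠ s` parts of
`e (∑ i, h i • Q i) P₀` and `e (∑ i, h i • Pk i) U`, so only the `i = s` terms survive.
-/

open Finset

theorem Finset.prod_eq_prod_mul_of_ne {ι G : Type*} [Fintype ι] [CommMonoid G] {y g : ι → G}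
    {s : ι} {c : G} (hy : ∀ i, i ≠ s → y i = g i) (hys : y s = g s * c) :
    ∏ i, y i = (∏ i, g i) * c := by
  classical
  rw [← mul_prod_erase univ y (mem_univ s), ← mul_prod_erase univ g (mem_univ s), hys,
    prod_congr rfl fun i hi => hy i (ne_of_mem_erase hi), mul_right_comm]

section Pairing

variable {M G : Type*} [AddCommGroup M] [CommGroup G] {e : M → M → G}

theorem pairing_zero_left (he : ∀ x y z, e (x + y) z = e x z * e y z) (z : M) : e 0 z = 1 := by
  simpa using he 0 0 z

theorem pairing_neg_left (he : ∀ x y z, e (x + y) z = e x z * e y z) (x z : M) :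
    e (-x) z = (e x z)⁻¹ :=
  eq_inv_of_mul_eq_one_left <| by rw [← he, neg_add_cancel, pairing_zero_left he]

theorem pairing_sum_left (he : ∀ x y z, e (x + y) z = e x z * e y z) {ι : Type*} (t : Finset ι)
    (f : ι → M) (z : M) : e (∑ i ∈ t, f i) z = ∏ i ∈ t, e (f i) z := by
  induction t using Finset.cons_induction with
  | empty => exact pairing_zero_left he z
  | cons a t ha ih => rw [sum_cons, prod_cons, he, ih]

end Pairing

theorem pairing_smul_comm {R M G : Type*} [SMul R M] {e : M → M → G}
    (he_smul : ∀ (a : R) (x y : M), e (a • x) y = e x (a • y)) (he_symm : ∀ x y, e x y = e y x)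
    (a : R) (x y : M) : e (a • x) y = e (a • y) x := by
  rw [he_smul, he_symm]

theorem clring_correctness_general
    {q : ℕ}
    {G₁ : Type*} [AddCommGroup G₁] [Module (ZMod q) G₁]
    {G₂ : Type*} [CommGroup G₂]
    (P : G₁) (e : G₁ → G₁ → G₂)
    (e_add_left : ∀ x y z : G₁, e (x + y) z = e x z * e y z)
    (e_smul : ∀ (a : ZMod q) (x y : G₁), e (a • x) y = e x (a • y))
    (e_symm : ∀ x y : G₁, e x y = e y x)
    (n : ℕ) (s : Fin n)
    (κ x_s : ZMod q) (r h : Fin n → ZMod q)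
    (Q Pk : Fin n → G₁) (U P₀ D_s : G₁)
    (hP₀ : P₀ = κ • P) (hPk : Pk s = x_s • P) (hDs : D_s = κ • Q s)
    (y : Fin n → G₂)
    (hy : ∀ i, i ≠ s → y i = e (r i • P) P)
    (hys : y s = e (r s • P) P
        * e (-P₀) (∑ i ∈ Finset.univ.erase s, h i • Q i)
        * e (-U) (∑ i ∈ Finset.univ.erase s, h i • Pk i))
    (V : G₁) (hV : V = (∑ i, r i) • P + h s • (D_s + x_s • U)) :
    e V P = (∏ i, y i) * e (∑ i, h i • Q i) P₀ * e (∑ i, h i • Pk i) U := by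
  set SQ := ∑ i ∈ univ.erase s, h i • Q i
  set SPk := ∑ i ∈ univ.erase s, h i • Pk i
  have hQ : e (h s • D_s) P = e (h s • Q s) P₀ := by rw [hDs, hP₀, smul_comm, e_smul]
  have hU : e (h s • x_s • U) P = e (h s • Pk s) U := by
    rw [hPk, smul_smul, smul_smul, pairing_smul_comm e_smul e_symm]
  have hV' : e V P = (∏ i, e (r i • P) P) * e (h s • Q s) P₀ * e (h s • Pk s) U := by
    rw [hV, smul_add, e_add_left, e_add_left, sum_smul, pairing_sum_left e_add_left, hQ, hU,
      mul_assoc]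
  have hprod : ∏ i, y i = (∏ i, e (r i • P) P) * ((e SQ P₀)⁻¹ * (e SPk U)⁻¹) := by
    refine prod_eq_prod_mul_of_ne hy ?_
    rw [hys, mul_assoc, pairing_neg_left e_add_left, pairing_neg_left e_add_left, e_symm P₀,
      e_symm U]
  have hsplitQ : e (∑ i, h i • Q i) P₀ = e SQ P₀ * e (h s • Q s) P₀ := by
    rw [← sum_erase_add _ _ (mem_univ s), e_add_left]
  have hsplitPk : e (∑ i, h i • Pk i) U = e SPk U * e (h s • Pk s) U := by
    rw [← sum_erase_add _ _ (mem_univ s), e_add_left]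
  rw [hV', hprod, hsplitQ, hsplitPk]
  simp [mul_assoc, mul_comm, mul_left_comm]

theorem clring_correctness
    {q : ℕ} [Fact (Nat.Prime q)]
    {G₁ : Type*} [AddCommGroup G₁] [Module (ZMod q) G₁]
    {G₂ : Type*} [CommGroup G₂]
    (P : G₁) (e : G₁ → G₁ → G₂)
    (e_add_left : ∀ x y z : G₁, e (x + y) z = e x z * e y z)
    (e_add_right : ∀ x y z : G₁, e x (y + z) = e x y * e x z)
    (e_smul : ∀ (a : ZMod q) (x y : G₁), e (a • x) y = e x (a • y))
    (e_symm : ∀ x y : G₁, e x y = e y x)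
    (n : ℕ) (hn : 0 < n) (s : Fin n)
    (κ x_s : ZMod q) (r h : Fin n → ZMod q)
    (Q Pk : Fin n → G₁) (U P₀ D_s : G₁)
    (hP₀ : P₀ = κ • P) (hPk : Pk s = x_s • P) (hDs : D_s = κ • Q s)
    (y : Fin n → G₂)
    (hy : ∀ i, i ≠ s → y i = e (r i • P) P)
    (hys : y s = e (r s • P) P
        * e (-P₀) (∑ i ∈ Finset.univ.erase s, h i • Q i)
        * e (-U) (∑ i ∈ Finset.univ.erase s, h i • Pk i))
    (V : G₁) (hV : V = (∑ i, r i) • P + h s • (D_s + x_s • U)) :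
    e V P = (∏ i, y i) * e (∑ i, h i • Q i) P₀ * e (∑ i, h i • Pk i) U :=
  clring_correctness_general P e e_add_left e_smul e_symm n s κ x_s r h Q Pk U P₀ D_s hP₀ hPk hDs y
    hy hys V hV
end

section
/- Correctness of the simulated ring signatures produced by the challenger in the security proofs: Let n be a positive natural number, s : Fin n, scalars r, h : Fin n → ZMod q, elements Q, Pk : Fin n → G₁ and P₀, U, V : G₁ all arbitrary. Define y : Fin n → G₂ by y i = e((r i)•P, P) for i ≠ s and y s = e(V - (∑_{i ≠ s} r i)•P, P) · (e(∑ i, (h i)•(Q i), P₀))⁻¹ · (e(∑ i, (h i)•(Pk i), U))⁻¹. Then the verification equation holds: e(V, P) = (∏ i, y i) · e(∑ i, (h i)•(Q i), P₀) · e(∑ i, (h i)•(Pk i), U). -/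
theorem clring_simulation_correctness
    {q : ℕ} [Fact (Nat.Prime q)]
    {G₁ : Type*} [AddCommGroup G₁] [Module (ZMod q) G₁]
    {G₂ : Type*} [CommGroup G₂]
    (P : G₁) (e : G₁ → G₁ → G₂)
    (e_add_left : ∀ x y z : G₁, e (x + y) z = e x z * e y z)
    (e_add_right : ∀ x y z : G₁, e x (y + z) = e x y * e x z)
    (e_smul : ∀ (a : ZMod q) (x y : G₁), e (a • x) y = e x (a • y))
    (n : ℕ) (hn : 0 < n) (s : Fin n)
    (r h : Fin n → ZMod q)
    (Q Pk : Fin n → G₁) (P₀ U V : G₁)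
    (y : Fin n → G₂)
    (hy : ∀ i, i ≠ s → y i = e (r i • P) P)
    (hys : y s = e (V - (∑ i ∈ Finset.univ.erase s, r i) • P) P
        * (e (∑ i, h i • Q i) P₀)⁻¹
        * (e (∑ i, h i • Pk i) U)⁻¹) :
    e V P = (∏ i, y i) * e (∑ i, h i • Q i) P₀ * e (∑ i, h i • Pk i) U := by
  have hzero : e 0 P = 1 := by
    have := e_add_left 0 0 P
    simpa using this
  let F : G₁ →+ Additive G₂ :=
    { toFun := fun x => Additive.ofMul (e x P)
      map_zero' := by simpa using congrArg Additive.ofMul hzero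
      map_add' := fun x z => by simpa using congrArg Additive.ofMul (e_add_left x z P) }
  have hsub : ∀ x z : G₁, e (x - z) P = e x P * (e z P)⁻¹ := fun x z => by
    have := F.map_sub x z
    simpa [F, div_eq_mul_inv] using congrArg Additive.toMul this
  set T : ZMod q := ∑ i ∈ Finset.univ.erase s, r i with hT
  have hprod : ∏ i ∈ Finset.univ.erase s, y i = e (T • P) P := by
    have h1 : ∏ i ∈ Finset.univ.erase s, y i
        = ∏ i ∈ Finset.univ.erase s, e (r i • P) P := by
      apply Finset.prod_congr rfl
      intro i hi
      exact hy i (Finset.ne_of_mem_erase hi)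
    have h2 := map_sum F (fun i => r i • P) (Finset.univ.erase s)
    simp only [F, AddMonoidHom.coe_mk, ZeroHom.coe_mk] at h2
    have h3 : e (T • P) P = Additive.toMul (∑ i ∈ Finset.univ.erase s, Additive.ofMul (e (r i • P) P)) := by
      rw [hT, Finset.sum_smul]
      exact congrArg Additive.toMul h2
    rw [h1, h3, toMul_sum]
    rfl
  have hsplit : ∏ i, y i = y s * ∏ i ∈ Finset.univ.erase s, y i :=
    (Finset.mul_prod_erase Finset.univ y (Finset.mem_univ s)).symm
  rw [hsplit, hprod, hys, hsub]
  simp [mul_comm, mul_left_comm, mul_assoc]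
end

section
/- Forking difference lemma: Let n be a positive natural number, s : Fin n, y : Fin n → G₂, Q, Pk : Fin n → G₁, P₀, U, V, V' : G₁, and h, h' : Fin n → ZMod q with h i = h' i for every i ≠ s. If both verification equations hold, i.e. e(V, P) = (∏ i, y i) · e(∑ i, (h i)•(Q i), P₀) · e(∑ i, (h i)•(Pk i), U) and e(V', P) = (∏ i, y i) · e(∑ i, (h' i)•(Q i), P₀) · e(∑ i, (h' i)•(Pk i), U), then e(V - V', P) = e((h s - h' s)•(Pk s), U) · e((h s - h' s)•(Q s), P₀). -/
theorem clring_forking_difference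
    {q : ℕ} [Fact (Nat.Prime q)]
    {G₁ : Type*} [AddCommGroup G₁] [Module (ZMod q) G₁]
    {G₂ : Type*} [CommGroup G₂]
    (P : G₁) (e : G₁ → G₁ → G₂)
    (e_add_left : ∀ x y z : G₁, e (x + y) z = e x z * e y z)
    (e_add_right : ∀ x y z : G₁, e x (y + z) = e x y * e x z)
    (e_smul : ∀ (a : ZMod q) (x y : G₁), e (a • x) y = e x (a • y))
    (n : ℕ) (hn : 0 < n) (s : Fin n)
    (y : Fin n → G₂) (Q Pk : Fin n → G₁) (P₀ U V V' : G₁)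
    (h h' : Fin n → ZMod q) (hhh : ∀ i, i ≠ s → h i = h' i)
    (hver : e V P = (∏ i, y i) * e (∑ i, h i • Q i) P₀ * e (∑ i, h i • Pk i) U)
    (hver' : e V' P = (∏ i, y i) * e (∑ i, h' i • Q i) P₀ * e (∑ i, h' i • Pk i) U) :
    e (V - V') P = e ((h s - h' s) • Pk s) U * e ((h s - h' s) • Q s) P₀ := by
  have e_zero : ∀ z : G₁, e 0 z = 1 := by
    intro z
    have := e_add_left 0 0 z
    simpa using (mul_left_cancel (a := e 0 z) (by rw [← this]; simp)).symm
  have e_neg : ∀ x z : G₁, e (-x) z = (e x z)⁻¹ := by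
    intro x z
    have := e_add_left x (-x) z
    simp [e_zero] at this
    exact (eq_inv_of_mul_eq_one_right this.symm)
  have e_sub : ∀ x y z : G₁, e (x - y) z = e x z * (e y z)⁻¹ := by
    intro x y z
    rw [sub_eq_add_neg, e_add_left, e_neg]
  have hQ : (∑ i, h i • Q i) - (∑ i, h' i • Q i) = (h s - h' s) • Q s := by
    rw [← Finset.sum_sub_distrib]
    rw [Fintype.sum_eq_single s]
    · rw [sub_smul]
    · intro i hi; rw [hhh i hi, sub_self]
  have hPk : (∑ i, h i • Pk i) - (∑ i, h' i • Pk i) = (h s - h' s) • Pk s := by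
    rw [← Finset.sum_sub_distrib]
    rw [Fintype.sum_eq_single s]
    · rw [sub_smul]
    · intro i hi; rw [hhh i hi, sub_self]
  rw [e_sub, hver, hver', ← hQ, ← hPk, e_sub, e_sub]
  simp [mul_inv_cancel_left, mul_comm, mul_left_comm, mul_assoc]
end

section
/- CDH extraction, Case 1 of the proof of Theorem 1: Let a, b, α, β, h, h' : ZMod q with h ≠ h' and α ≠ 0, let Pk_s : G₁ be arbitrary, and set P₀ = a•P, Q_s = α•(b•P), U = β•P. If V, V' : G₁ satisfy e(V - V', P) = e((h - h')•Pk_s, U) · e((h - h')•Q_s, P₀), then (a*b)•P = α⁻¹•((h - h')⁻¹•(V - V') - β•Pk_s); i.e. the CDH solution a·b·P is computable from the two forged signatures. -/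
theorem clring_cdh_extraction_case1
    {q : ℕ} [Fact (Nat.Prime q)]
    {G₁ : Type*} [AddCommGroup G₁] [Module (ZMod q) G₁]
    {G₂ : Type*} [CommGroup G₂]
    (P : G₁) (e : G₁ → G₁ → G₂)
    (e_add_left : ∀ x y z : G₁, e (x + y) z = e x z * e y z)
    (e_add_right : ∀ x y z : G₁, e x (y + z) = e x y * e x z)
    (e_smul : ∀ (a : ZMod q) (x y : G₁), e (a • x) y = e x (a • y))
    (e_nd : ∀ x : G₁, e x P = 1 → x = 0)
    (a b α β h h' : ZMod q) (hne : h ≠ h') (hα : α ≠ 0)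
    (Pk_s P₀ Q_s U : G₁)
    (hP₀ : P₀ = a • P) (hQs : Q_s = α • (b • P)) (hU : U = β • P)
    (V V' : G₁)
    (heq : e (V - V') P = e ((h - h') • Pk_s) U * e ((h - h') • Q_s) P₀) :
    (a * b) • P = α⁻¹ • ((h - h')⁻¹ • (V - V') - β • Pk_s) := by
  have hzero : e (0 : G₁) P = 1 := by
    have := e_add_left 0 0 P
    simp at this
    exact this
  have hinv : ∀ x : G₁, e (-x) P = (e x P)⁻¹ := by
    intro x
    have := e_add_left x (-x) P
    simp [hzero] at this
    exact (eq_inv_of_mul_eq_one_right this.symm)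
  set W : G₁ := β • ((h - h') • Pk_s) + a • ((h - h') • Q_s) with hW
  have hWeq : e W P = e (V - V') P := by
    rw [hW, e_add_left, e_smul β, e_smul a, ← hU, ← hP₀, heq]
  have hX : V - V' - W = 0 := by
    apply e_nd
    rw [sub_eq_add_neg, e_add_left, hinv, hWeq]
    simp
  have hVW : V - V' = W := sub_eq_zero.mp hX
  have hd : h - h' ≠ 0 := sub_ne_zero.mpr hne
  rw [hVW, hW, hQs]
  match_scalars <;> (field_simp; try ring)
end

section
/- CDH extraction, Case 2 of the proof of Theorem 1: Let a, b, α, β, x, h, h' : ZMod q with h ≠ h', x ≠ 0 and β ≠ 0, and set P₀ = a•P, Pk_s = x•(a•P), U = β•(b•P), Q_s = α•P. If V, V' : G₁ satisfy e(V - V', P) = e((h - h')•Pk_s, U) · e((h - h')•Q_s, P₀), then (a*b)•P = (x*β)⁻¹•((h - h')⁻¹•(V - V') - α•P₀). -/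
/-!
Bilinearity collapses the right-hand side of the hypothesis to `e (c • P) P` with
`c = (h - h') * (x * β * (a * b) + α * a)`, and nondegeneracy at `P` upgrades this equality of
pairings to `V - V' = c • P`. Solving for `a * b` in the field `ZMod q` gives the claim.
-/

theorem eq_of_map_eq_of_trivial_ker {M G : Type*} [AddGroup M] [Group G] (f : M → G)
    (map_add : ∀ u v, f (u + v) = f u * f v) (trivial_ker : ∀ u, f u = 1 → u = 0) {v w : M}
    (hvw : f v = f w) : v = w := by
  have hsplit := map_add (v - w) w
  rw [sub_add_cancel, hvw] at hsplit
  exact sub_eq_zero.mp (trivial_ker _ (mul_eq_right.mp hsplit.symm))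

theorem pairing_smul_smul {R M G : Type*} [Monoid R] [MulAction R M] (e : M → M → G)
    (e_smul : ∀ (a : R) (x y : M), e (a • x) y = e x (a • y)) (s t : R) (P : M) :
    e (s • P) (t • P) = e ((t * s) • P) P := by
  rw [← e_smul, smul_smul]

theorem clring_cdh_extraction_case2_general
    {q : ℕ} [Fact (Nat.Prime q)]
    {G₁ : Type*} [AddCommGroup G₁] [Module (ZMod q) G₁]
    {G₂ : Type*} [CommGroup G₂]
    (P : G₁) (e : G₁ → G₁ → G₂)
    (e_add_left : ∀ x y z : G₁, e (x + y) z = e x z * e y z)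
    (e_smul : ∀ (a : ZMod q) (x y : G₁), e (a • x) y = e x (a • y))
    (e_nd : ∀ x : G₁, e x P = 1 → x = 0)
    (a b α β x h h' : ZMod q) (hne : h ≠ h') (hx : x ≠ 0) (hβ : β ≠ 0)
    (P₀ Pk_s U Q_s : G₁)
    (hP₀ : P₀ = a • P) (hPk : Pk_s = x • (a • P)) (hU : U = β • (b • P))
    (hQs : Q_s = α • P)
    (V V' : G₁)
    (heq : e (V - V') P = e ((h - h') • Pk_s) U * e ((h - h') • Q_s) P₀) :
    (a * b) • P = (x * β)⁻¹ • ((h - h')⁻¹ • (V - V') - α • P₀) := by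
  have hd : h - h' ≠ 0 := sub_ne_zero.mpr hne
  have hdiff : V - V' = ((h - h') * (x * β * (a * b) + α * a)) • P := by
    refine eq_of_map_eq_of_trivial_ker (e · P) (fun u v => e_add_left u v P) e_nd ?_
    simp only [heq, hPk, hU, hQs, hP₀, smul_smul, pairing_smul_smul e e_smul, ← e_add_left,
      ← add_smul]
    congr 2
    ring
  rw [hdiff, hP₀, smul_smul, smul_smul, ← sub_smul, smul_smul]
  congr 1
  field_simp
  ring

theorem clring_cdh_extraction_case2
    {q : ℕ} [Fact (Nat.Prime q)]
    {G₁ : Type*} [AddCommGroup G₁] [Module (ZMod q) G₁]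
    {G₂ : Type*} [CommGroup G₂]
    (P : G₁) (e : G₁ → G₁ → G₂)
    (e_add_left : ∀ x y z : G₁, e (x + y) z = e x z * e y z)
    (e_add_right : ∀ x y z : G₁, e x (y + z) = e x y * e x z)
    (e_smul : ∀ (a : ZMod q) (x y : G₁), e (a • x) y = e x (a • y))
    (e_nd : ∀ x : G₁, e x P = 1 → x = 0)
    (a b α β x h h' : ZMod q) (hne : h ≠ h') (hx : x ≠ 0) (hβ : β ≠ 0)
    (P₀ Pk_s U Q_s : G₁)
    (hP₀ : P₀ = a • P) (hPk : Pk_s = x • (a • P)) (hU : U = β • (b • P))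
    (hQs : Q_s = α • P)
    (V V' : G₁)
    (heq : e (V - V') P = e ((h - h') • Pk_s) U * e ((h - h') • Q_s) P₀) :
    (a * b) • P = (x * β)⁻¹ • ((h - h')⁻¹ • (V - V') - α • P₀) :=
  clring_cdh_extraction_case2_general P e e_add_left e_smul e_nd a b α β x h h' hne hx hβ P₀ Pk_s U
    Q_s hP₀ hPk hU hQs V V' heq
end

section
/- CDH extraction in the proof of Theorem 2: Let a, b, κ, β, x, h, h' : ZMod q with h ≠ h', x ≠ 0 and β ≠ 0, let Q_s : G₁ be arbitrary, and set P₀ = κ•P, U = β•(a•P), Pk_s = x•(b•P). If V, V' : G₁ satisfy e(V - V', P) = e((h - h')•Pk_s, U) · e((h - h')•Q_s, P₀), then (a*b)•P = (x*β)⁻¹•((h - h')⁻¹•(V - V') - κ•Q_s); i.e. a challenger knowing the master key κ can compute the CDH solution a·b·P from the two forged signatures. -/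
/-! Moving every scalar into the left argument of `e` rewrites the forgery equation as
`e (V - V') P = e ((h - h') • ((x * β) • ((a * b) • P) + κ • Q_s)) P`;
nondegeneracy at `P` makes `e · P` injective, and the resulting linear equation is solved for `(a * b) • P`. -/

theorem map_sub_of_map_add {M N : Type*} [AddGroup M] [Group N] (f : M → N)
    (hf : ∀ x y, f (x + y) = f x * f y) (x y : M) : f (x - y) = f x / f y :=
  map_sub (AddMonoidHom.mk' (fun x => Additive.ofMul (f x)) hf) x y

theorem eq_of_map_eq_of_map_eq_one {M N : Type*} [AddGroup M] [Group N] (f : M → N)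
    (hf : ∀ x y, f (x + y) = f x * f y) (hf₁ : ∀ x, f x = 1 → x = 0) {x y : M}
    (hxy : f x = f y) : x = y :=
  sub_eq_zero.mp (hf₁ _ (by rw [map_sub_of_map_add f hf, hxy, div_self']))

theorem eq_inv_smul_of_eq_smul_smul_add {K E : Type*} [Field K] [AddCommGroup E] [Module K E]
    {c d : K} (hc : c ≠ 0) (hd : d ≠ 0) {u v w : E} (hw : w = c • (d • u + v)) :
    u = d⁻¹ • (c⁻¹ • w - v) := by
  rw [hw, inv_smul_smul₀ hc, add_sub_cancel_right, inv_smul_smul₀ hd]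

theorem clring_cdh_extraction_theorem2_general
    {q : ℕ} [Fact (Nat.Prime q)]
    {G₁ : Type*} [AddCommGroup G₁] [Module (ZMod q) G₁]
    {G₂ : Type*} [CommGroup G₂]
    (P : G₁) (e : G₁ → G₁ → G₂)
    (e_add_left : ∀ x y z : G₁, e (x + y) z = e x z * e y z)
    (e_smul : ∀ (a : ZMod q) (x y : G₁), e (a • x) y = e x (a • y))
    (e_nd : ∀ x : G₁, e x P = 1 → x = 0)
    (a b κ β x h h' : ZMod q) (hne : h ≠ h') (hx : x ≠ 0) (hβ : β ≠ 0)
    (Q_s P₀ U Pk_s : G₁)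
    (hP₀ : P₀ = κ • P) (hU : U = β • (a • P)) (hPk : Pk_s = x • (b • P))
    (V V' : G₁)
    (heq : e (V - V') P = e ((h - h') • Pk_s) U * e ((h - h') • Q_s) P₀) :
    (a * b) • P = (x * β)⁻¹ • ((h - h')⁻¹ • (V - V') - κ • Q_s) := by
  have hPk_U : e ((h - h') • Pk_s) U = e (((h - h') * (x * β) * (a * b)) • P) P := by
    rw [hPk, hU, ← e_smul, ← e_smul, smul_smul, smul_smul, smul_smul, smul_smul]
    ring_nf
  have hQ_P₀ : e ((h - h') • Q_s) P₀ = e (((h - h') * κ) • Q_s) P := by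
    rw [hP₀, ← e_smul, smul_smul, mul_comm]
  have hV : V - V' = (h - h') • ((x * β) • ((a * b) • P) + κ • Q_s) :=
    eq_of_map_eq_of_map_eq_one (e · P) (e_add_left · · P) e_nd <| by
      rw [heq, hPk_U, hQ_P₀, smul_add, smul_smul, smul_smul, smul_smul, e_add_left]
  exact eq_inv_smul_of_eq_smul_smul_add (sub_ne_zero.mpr hne) (mul_ne_zero hx hβ) hV

theorem clring_cdh_extraction_theorem2
    {q : ℕ} [Fact (Nat.Prime q)]
    {G₁ : Type*} [AddCommGroup G₁] [Module (ZMod q) G₁]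
    {G₂ : Type*} [CommGroup G₂]
    (P : G₁) (e : G₁ → G₁ → G₂)
    (e_add_left : ∀ x y z : G₁, e (x + y) z = e x z * e y z)
    (e_add_right : ∀ x y z : G₁, e x (y + z) = e x y * e x z)
    (e_smul : ∀ (a : ZMod q) (x y : G₁), e (a • x) y = e x (a • y))
    (e_nd : ∀ x : G₁, e x P = 1 → x = 0)
    (a b κ β x h h' : ZMod q) (hne : h ≠ h') (hx : x ≠ 0) (hβ : β ≠ 0)
    (Q_s P₀ U Pk_s : G₁)
    (hP₀ : P₀ = κ • P) (hU : U = β • (a • P)) (hPk : Pk_s = x • (b • P))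
    (V V' : G₁)
    (heq : e (V - V') P = e ((h - h') • Pk_s) U * e ((h - h') • Q_s) P₀) :
    (a * b) • P = (x * β)⁻¹ • ((h - h')⁻¹ • (V - V') - κ • Q_s) :=
  clring_cdh_extraction_theorem2_general P e e_add_left e_smul e_nd a b κ β x h h' hne hx hβ Q_s P₀
    U Pk_s hP₀ hU hPk V V' heq
end

section
/- End-to-end extraction for Theorem 1 (Case 1), combining the forking step with the case analysis: Let n be a positive natural number, s : Fin n, y : Fin n → G₂, Q, Pk : Fin n → G₁, V, V' : G₁, scalars a, b, α, β : ZMod q with α ≠ 0, and h, h' : Fin n → ZMod q with h i = h' i for every i ≠ s and h s ≠ h' s. Suppose P₀ = a•P, Q s = α•(b•P) and U = β•P, and that both verification equations hold: e(V, P) = (∏ i, y i) · e(∑ i, (h i)•(Q i), P₀) · e(∑ i, (h i)•(Pk i), U) and e(V', P) = (∏ i, y i) · e(∑ i, (h' i)•(Q i), P₀) · e(∑ i, (h' i)•(Pk i), U). Then (a*b)•P = α⁻¹•((h s - h' s)⁻¹•(V - V') - β•(Pk s)). -/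
/-!
Subtracting the two verification equations cancels `∏ i, y i` and every summand with `i ≠ s`,
leaving `e(V - V', P) = e((h s - h' s) • Q s, a • P) · e((h s - h' s) • Pk s, β • P)`.
Moving the scalars `a`, `β` across the pairing and using nondegeneracy at `P` turns this into the
equation `V - V' = (h s - h' s) • (a • Q s + β • Pk s)` in `G₁`, which is solved for
`(a * b) • P` since `Q s = α • b • P`.
-/

theorem Fintype.sum_sub_sum_eq_of_eq_of_ne {ι M : Type*} [Fintype ι] [AddCommGroup M]
    {f g : ι → M} (s : ι) (hfg : ∀ i, i ≠ s → f i = g i) :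
    ∑ i, f i - ∑ i, g i = f s - g s := by
  rw [← Finset.sum_sub_distrib, Fintype.sum_eq_single s]
  intro i hi
  rw [hfg i hi, sub_self]

section Pairing

variable {R G₁ G₂ : Type*} [AddCommGroup G₁] [CommGroup G₂] {e : G₁ → G₁ → G₂}

theorem pairing_sub_left (e_add_left : ∀ x y z : G₁, e (x + y) z = e x z * e y z)
    (x y z : G₁) : e (x - y) z = e x z / e y z :=
  map_div (MonoidHom.mk' (fun x : Multiplicative G₁ => e x.toAdd z)
    fun x y => e_add_left x.toAdd y.toAdd z) (.ofAdd x) (.ofAdd y)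

theorem eq_of_pairing_eq (e_add_left : ∀ x y z : G₁, e (x + y) z = e x z * e y z)
    {P : G₁} (e_nd : ∀ x : G₁, e x P = 1 → x = 0) {x y : G₁} (hxy : e x P = e y P) :
    x = y :=
  sub_eq_zero.mp <| e_nd _ <| by rw [pairing_sub_left e_add_left, hxy, div_self']

theorem sub_eq_of_verify [Semiring R] [Module R G₁]
    (e_add_left : ∀ x y z : G₁, e (x + y) z = e x z * e y z)
    (e_smul : ∀ (a : R) (x y : G₁), e (a • x) y = e x (a • y))
    {P : G₁} (e_nd : ∀ x : G₁, e x P = 1 → x = 0) {Y : G₂} {V V' S S' T T' : G₁} {a β : R}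
    (hver : e V P = Y * e S (a • P) * e T (β • P))
    (hver' : e V' P = Y * e S' (a • P) * e T' (β • P)) :
    V - V' = a • (S - S') + β • (T - T') := by
  refine eq_of_pairing_eq e_add_left e_nd ?_
  rw [pairing_sub_left e_add_left, hver, hver', e_add_left, e_smul, e_smul,
    pairing_sub_left e_add_left, pairing_sub_left e_add_left, mul_assoc, mul_assoc,
    mul_div_mul_left_eq_div, div_mul_div_comm]

end Pairing

theorem clring_end_to_end_theorem1_case1_general
    {q : ℕ} [Fact (Nat.Prime q)]
    {G₁ : Type*} [AddCommGroup G₁] [Module (ZMod q) G₁]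
    {G₂ : Type*} [CommGroup G₂]
    (P : G₁) (e : G₁ → G₁ → G₂)
    (e_add_left : ∀ x y z : G₁, e (x + y) z = e x z * e y z)
    (e_smul : ∀ (a : ZMod q) (x y : G₁), e (a • x) y = e x (a • y))
    (e_nd : ∀ x : G₁, e x P = 1 → x = 0)
    (n : ℕ) (s : Fin n)
    (y : Fin n → G₂) (Q Pk : Fin n → G₁) (V V' P₀ U : G₁)
    (a b α β : ZMod q) (hα : α ≠ 0)
    (h h' : Fin n → ZMod q) (hhh : ∀ i, i ≠ s → h i = h' i) (hs : h s ≠ h' s)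
    (hP₀ : P₀ = a • P) (hQs : Q s = α • (b • P)) (hU : U = β • P)
    (hver : e V P = (∏ i, y i) * e (∑ i, h i • Q i) P₀ * e (∑ i, h i • Pk i) U)
    (hver' : e V' P = (∏ i, y i) * e (∑ i, h' i • Q i) P₀ * e (∑ i, h' i • Pk i) U) :
    (a * b) • P = α⁻¹ • ((h s - h' s)⁻¹ • (V - V') - β • Pk s) := by
  subst hP₀ hU
  have hdiff : V - V' = (h s - h' s) • (a • Q s + β • Pk s) := by
    rw [sub_eq_of_verify e_add_left e_smul e_nd hver hver',
      Fintype.sum_sub_sum_eq_of_eq_of_ne s fun i hi => by rw [hhh i hi],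
      Fintype.sum_sub_sum_eq_of_eq_of_ne s fun i hi => by rw [hhh i hi],
      ← sub_smul, ← sub_smul, smul_comm a, smul_comm β, smul_add]
  rw [hdiff, inv_smul_smul₀ (sub_ne_zero.mpr hs), add_sub_cancel_right, hQs, smul_comm a,
    inv_smul_smul₀ hα, smul_smul]

theorem clring_end_to_end_theorem1_case1
    {q : ℕ} [Fact (Nat.Prime q)]
    {G₁ : Type*} [AddCommGroup G₁] [Module (ZMod q) G₁]
    {G₂ : Type*} [CommGroup G₂]
    (P : G₁) (e : G₁ → G₁ → G₂)
    (e_add_left : ∀ x y z : G₁, e (x + y) z = e x z * e y z)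
    (e_add_right : ∀ x y z : G₁, e x (y + z) = e x y * e x z)
    (e_smul : ∀ (a : ZMod q) (x y : G₁), e (a • x) y = e x (a • y))
    (e_nd : ∀ x : G₁, e x P = 1 → x = 0)
    (n : ℕ) (hn : 0 < n) (s : Fin n)
    (y : Fin n → G₂) (Q Pk : Fin n → G₁) (V V' P₀ U : G₁)
    (a b α β : ZMod q) (hα : α ≠ 0)
    (h h' : Fin n → ZMod q) (hhh : ∀ i, i ≠ s → h i = h' i) (hs : h s ≠ h' s)
    (hP₀ : P₀ = a • P) (hQs : Q s = α • (b • P)) (hU : U = β • P)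
    (hver : e V P = (∏ i, y i) * e (∑ i, h i • Q i) P₀ * e (∑ i, h i • Pk i) U)
    (hver' : e V' P = (∏ i, y i) * e (∑ i, h' i • Q i) P₀ * e (∑ i, h' i • Pk i) U) :
    (a * b) • P = α⁻¹ • ((h s - h' s)⁻¹ • (V - V') - β • Pk s) :=
  clring_end_to_end_theorem1_case1_general P e e_add_left e_smul e_nd n s y Q Pk V V' P₀ U a b α β
    hα h h' hhh hs hP₀ hQs hU hver hver'
end

section
/- End-to-end extraction for Theorem 2, combining the forking step with the key-substitution analysis: Let n be a positive natural number, s : Fin n, y : Fin n → G₂, Q, Pk : Fin n → G₁, V, V' : G₁, scalars a, b, κ, β, x : ZMod q with x ≠ 0 and β ≠ 0, and h, h' : Fin n → ZMod q with h i = h' i for every i ≠ s and h s ≠ h' s. Suppose P₀ = κ•P, U = β•(a•P) and Pk s = x•(b•P), and that both verification equations hold: e(V, P) = (∏ i, y i) · e(∑ i, (h i)•(Q i), P₀) · e(∑ i, (h i)•(Pk i), U) and e(V', P) = (∏ i, y i) · e(∑ i, (h' i)•(Q i), P₀) · e(∑ i, (h' i)•(Pk i), U). Then (a*b)•P = (x*β)⁻¹•((h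 s - h' s)⁻¹•(V - V') - κ•(Q s)). -/
theorem clring_end_to_end_theorem2
    {q : ℕ} [Fact (Nat.Prime q)]
    {G₁ : Type*} [AddCommGroup G₁] [Module (ZMod q) G₁]
    {G₂ : Type*} [CommGroup G₂]
    (P : G₁) (e : G₁ → G₁ → G₂)
    (e_add_left : ∀ x y z : G₁, e (x + y) z = e x z * e y z)
    (e_add_right : ∀ x y z : G₁, e x (y + z) = e x y * e x z)
    (e_smul : ∀ (a : ZMod q) (x y : G₁), e (a • x) y = e x (a • y))
    (e_nd : ∀ x : G₁, e x P = 1 → x = 0)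
    (n : ℕ) (hn : 0 < n) (s : Fin n)
    (y : Fin n → G₂) (Q Pk : Fin n → G₁) (V V' P₀ U : G₁)
    (a b κ β x : ZMod q) (hx : x ≠ 0) (hβ : β ≠ 0)
    (h h' : Fin n → ZMod q) (hhh : ∀ i, i ≠ s → h i = h' i) (hs : h s ≠ h' s)
    (hP₀ : P₀ = κ • P) (hU : U = β • (a • P)) (hPk : Pk s = x • (b • P))
    (hver : e V P = (∏ i, y i) * e (∑ i, h i • Q i) P₀ * e (∑ i, h i • Pk i) U)
    (hver' : e V' P = (∏ i, y i) * e (∑ i, h' i • Q i) P₀ * e (∑ i, h' i • Pk i) U) :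
    (a * b) • P = (x * β)⁻¹ • ((h s - h' s)⁻¹ • (V - V') - κ • Q s) := by
  have e_zero : ∀ z : G₁, e 0 z = 1 := by
    intro z
    have := e_add_left 0 0 z
    simpa using this
  have e_zero_right : ∀ z : G₁, e z 0 = 1 := by
    intro z
    have := e_add_right z 0 0
    simpa using this
  have e_neg : ∀ u z : G₁, e (-u) z = (e u z)⁻¹ := by
    intro u z
    have := e_add_left u (-u) z
    simp only [add_neg_cancel, e_zero] at this
    rw [eq_inv_iff_mul_eq_one, mul_comm]
    exact this.symm
  have e_sub : ∀ u v z : G₁, e (u - v) z = e u z * (e v z)⁻¹ := by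
    intro u v z
    rw [sub_eq_add_neg, e_add_left, e_neg]
  have e_inj : ∀ u w : G₁, e u P = e w P → u = w := by
    intro u w huw
    have : e (u - w) P = 1 := by rw [e_sub, huw, mul_inv_cancel]
    have := e_nd _ this
    exact sub_eq_zero.mp this
  set δ := h s - h' s with hδ
  have hδ0 : δ ≠ 0 := sub_ne_zero.mpr hs
  -- collapse sums
  have sumQ : (∑ i, h i • Q i) - (∑ i, h' i • Q i) = δ • Q s := by
    rw [← Finset.sum_sub_distrib]
    rw [Finset.sum_eq_single s]
    · rw [← sub_smul]
    · intro i _ hi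
      rw [hhh i hi, sub_self]
    · intro habs; exact absurd (Finset.mem_univ s) habs
  have sumPk : (∑ i, h i • Pk i) - (∑ i, h' i • Pk i) = δ • Pk s := by
    rw [← Finset.sum_sub_distrib]
    rw [Finset.sum_eq_single s]
    · rw [← sub_smul]
    · intro i _ hi
      rw [hhh i hi, sub_self]
    · intro habs; exact absurd (Finset.mem_univ s) habs
  have key : V - V' = (κ * δ) • Q s + ((β * a) * (δ * (x * b))) • P := by
    apply e_inj
    rw [e_sub, hver, hver']
    have h1 : e (∑ i, h i • Q i) P₀ * (e (∑ i, h' i • Q i) P₀)⁻¹ = e (δ • Q s) P₀ := by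
      rw [← e_sub, sumQ]
    have h2 : e (∑ i, h i • Pk i) U * (e (∑ i, h' i • Pk i) U)⁻¹ = e (δ • Pk s) U := by
      rw [← e_sub, sumPk]
    have lhs_eq : (∏ i, y i) * e (∑ i, h i • Q i) P₀ * e (∑ i, h i • Pk i) U *
        ((∏ i, y i) * e (∑ i, h' i • Q i) P₀ * e (∑ i, h' i • Pk i) U)⁻¹
        = e (δ • Q s) P₀ * e (δ • Pk s) U := by
      rw [← h1, ← h2]
      simp [mul_inv, mul_comm, mul_left_comm, mul_assoc]
    rw [lhs_eq, hP₀, hU, hPk]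
    have hq : e (δ • Q s) (κ • P) = e ((κ * δ) • Q s) P := by
      rw [mul_smul, e_smul κ (δ • Q s) P]
    have hp : e (δ • (x • b • P)) (β • a • P) = e (((β * a) * (δ * (x * b))) • P) P := by
      rw [show ((β * a) * (δ * (x * b))) • P = ((β * a) • (δ • (x • b • P)) : G₁) by
        match_scalars; ring]
      rw [e_smul (β * a) (δ • (x • b • P)) P, mul_smul]
    rw [hq, hp, e_add_left]
  rw [key]
  match_scalars <;> field_simp <;> ring
end
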